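/- The sequential relation S_m is computational: it is synchronized, and every element s ∈ S_m has at most one coordinate with content · (i.e., |s^{-1}(D)| ≤ 1). -/

import Mathlib

/-!
The computational tuples form a subpower of `A(M)^m` containing every generator `σ_k`, hence
containing `S_m`. Each fundamental operation computes its output state from the input states
alone, so it preserves synchronization. Apart from `P`, an operation outputs content `·` only in a
coordinate where a designated argument has `·` (for `N·`: where `u` and one of `x`, `y` have `·`,
or where both `x` and `y` do), so at most one such coordinate survives. On synchronized selectors
`u`, `v` the test of `P` comes out the same in every coordinate, so `P(u,v,x,y)` is `x` or `y`
as a whole.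
-/

namespace AMPaper

inductive Cnt
  | dot | times | zero | A | B
deriving DecidableEq

inductive Reg
  | A | B
deriving DecidableEq

/-- A Minsky machine instruction for a machine with states `{0,…,N}`:
`inc R j` is `(i,R,j)` and `dec R k j` is `(i,R,k,j)`. -/
inductive Instr (N : ℕ)
  | inc : Reg → Fin (N + 1) → Instr N
  | dec : Reg → Fin (N + 1) → Fin (N + 1) → Instr N

/-- A Minsky machine with states `{0,…,N}` and exactly one instruction per state. -/
structure Minsky (N : ℕ) where
  instr : Fin (N + 1) → Instr N

/-- Elements of the universe `A(M)`: pairs `⟨i,c⟩` of a state and a content. -/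
abbrev El (N : ℕ) := Fin (N + 1) × Cnt

/-- The content corresponding to a register. -/
def regCnt : Reg → Cnt
  | .A => Cnt.A
  | .B => Cnt.B

/-- The helper function `X(⟨i,c⟩) = ⟨i,×⟩`. -/
def Xf {N : ℕ} (x : El N) : El N := (x.1, Cnt.times)

/-- The semilattice meet. -/
def meet {N : ℕ} (x y : El N) : El N :=
  if x = y then x else (min x.1 y.1, Cnt.times)

/-- The order induced by the meet: `x ≤ y` iff `x ∧ y = x`. -/
def elLe {N : ℕ} (x y : El N) : Prop := meet x y = x

/-- The operation `M(x,y)` of `A(M)`. -/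
def Mop {N : ℕ} (m : Minsky N) (x y : El N) : El N :=
  if x.1 = y.1 then
    match m.instr x.1 with
    | .inc R j =>
        if x.2 = Cnt.dot ∧ y.2 = Cnt.zero then (j, regCnt R)
        else if x.2 = Cnt.zero ∧ y.2 = Cnt.dot then (j, Cnt.dot)
        else if x = y ∧ x.2 ≠ Cnt.dot then (j, x.2)
        else (j, Cnt.times)
    | .dec R _ j =>
        if x.2 = Cnt.dot ∧ y.2 = regCnt R then (j, Cnt.zero)
        else if x.2 = regCnt R ∧ y.2 = Cnt.dot then (j, Cnt.dot)
        else if x = y ∧ x.2 ≠ Cnt.dot then (j, x.2)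
        else (j, Cnt.times)
  else Xf y

/-- The operation `M'(x)` of `A(M)`. -/
def M'op {N : ℕ} (m : Minsky N) (x : El N) : El N :=
  match m.instr x.1 with
  | .dec R k _ => if x.2 = regCnt R then (k, Cnt.times) else (k, x.2)
  | .inc _ _ => Xf x

/-- The operation `I(x,y)` of `A(M)`. -/
def Iop {N : ℕ} (x y : El N) : El N :=
  if x.2 = Cnt.dot then ((1 : Fin (N + 1)), Cnt.dot)
  else if y.2 = Cnt.zero ∨ y.2 = Cnt.A ∨ y.2 = Cnt.B then ((1 : Fin (N + 1)), Cnt.zero)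
  else ((1 : Fin (N + 1)), Cnt.times)

/-- The operation `H(x)` of `A(M)`. -/
def Hop {N : ℕ} (x : El N) : El N :=
  if x = ((0 : Fin (N + 1)), Cnt.zero) ∨ x = ((0 : Fin (N + 1)), Cnt.dot)
  then ((0 : Fin (N + 1)), Cnt.zero)
  else ((0 : Fin (N + 1)), Cnt.times)

/-- The operation `N₀(x,y,z)` of `A(M)`. -/
def N0op {N : ℕ} (x y z : El N) : El N :=
  if x = ((0 : Fin (N + 1)), Cnt.dot) ∧ y.1 = z.1 then y
  else if x = ((0 : Fin (N + 1)), Cnt.zero) ∧ z.2 ≠ Cnt.dot ∧ y.1 = z.1 then z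
  else Xf (meet y z)

/-- The operation `S(x,y,z)` of `A(M)`. -/
def Sop {N : ℕ} (x y z : El N) : El N :=
  if x = ((1 : Fin (N + 1)), Cnt.zero) ∧ y.1 = (1 : Fin (N + 1)) ∧ z.1 = (1 : Fin (N + 1)) ∧
      ((y.2 = Cnt.dot ∧ z.2 = Cnt.zero) ∨ (y.2 = Cnt.zero ∧ z.2 = Cnt.dot) ∨
        (y.2 = Cnt.zero ∧ z.2 = Cnt.zero))
  then ((1 : Fin (N + 1)), Cnt.zero)
  else ((1 : Fin (N + 1)), Cnt.times)

/-- The operation `N·(u,x,y,z)` of `A(M)`. -/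
def Ndotop {N : ℕ} (u x y z : El N) : El N :=
  if x = y ∧ x.2 ≠ Cnt.times ∧ x.1 = z.1 then x
  else if u.2 = Cnt.dot ∧ y.2 = Cnt.times ∧ x.1 = y.1 ∧ y.1 = z.1 then x
  else if u.2 = Cnt.dot ∧ x.2 = Cnt.times ∧ x.1 = y.1 ∧ y.1 = z.1 then y
  else if u.2 = Cnt.dot ∧ (z = x ∨ z = y) ∧ x.1 = y.1 ∧ y.1 = z.1 then z
  else Xf (meet x (meet y z))

/-- The operation `P(u,v,x,y)` of `A(M)`. -/
def Pop {N : ℕ} (u v x y : El N) : El N :=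
  if u.1 = v.1 then x else y

/-- A subset `R ⊆ A(M)^ι` is a subpower if it is closed under all nine
fundamental operations of `A(M)` applied coordinatewise. -/
def IsSubpower {N : ℕ} (m : Minsky N) {ι : Type} (R : Set (ι → El N)) : Prop :=
  (∀ a ∈ R, ∀ b ∈ R, (fun i => meet (a i) (b i)) ∈ R) ∧
  (∀ a ∈ R, ∀ b ∈ R, (fun i => Mop m (a i) (b i)) ∈ R) ∧
  (∀ a ∈ R, (fun i => M'op m (a i)) ∈ R) ∧
  (∀ a ∈ R, ∀ b ∈ R, (fun i => Iop (a i) (b i)) ∈ R) ∧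
  (∀ a ∈ R, (fun i => Hop (a i)) ∈ R) ∧
  (∀ a ∈ R, ∀ b ∈ R, ∀ c ∈ R, (fun i => N0op (a i) (b i) (c i)) ∈ R) ∧
  (∀ a ∈ R, ∀ b ∈ R, ∀ c ∈ R, (fun i => Sop (a i) (b i) (c i)) ∈ R) ∧
  (∀ u ∈ R, ∀ a ∈ R, ∀ b ∈ R, ∀ c ∈ R, (fun i => Ndotop (u i) (a i) (b i) (c i)) ∈ R) ∧
  (∀ u ∈ R, ∀ v ∈ R, ∀ a ∈ R, ∀ b ∈ R, (fun i => Pop (u i) (v i) (a i) (b i)) ∈ R)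

/-- A tuple is synchronized if its state is constant across coordinates. -/
def Sync {N : ℕ} {ι : Type} (r : ι → El N) : Prop :=
  ∀ i j : ι, (r i).1 = (r j).1

/-- The subpower of `A(M)^ι` generated by a set `G`. -/
def Sg {N : ℕ} (m : Minsky N) {ι : Type} (G : Set (ι → El N)) : Set (ι → El N) :=
  {x | ∀ R : Set (ι → El N), IsSubpower m R → G ⊆ R → x ∈ R}

/-- The generators `σ_i` of the `m`-th sequential relation. -/
def sigmaGen (N m : ℕ) (i : Fin m) : Fin m → El N := fun j =>
  if i = j then ((1 : Fin (N + 1)), Cnt.dot) else ((1 : Fin (N + 1)), Cnt.zero)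

/-- The `m`-th sequential relation `S_m`, generated by `σ_1,…,σ_m`. -/
def seqRel (N : ℕ) (mm : Minsky N) (m : ℕ) : Set (Fin m → El N) :=
  Sg mm (Set.range (sigmaGen N m))

lemma Sg_subset {N : ℕ} {m : Minsky N} {ι : Type} {G R : Set (ι → El N)}
    (hR : IsSubpower m R) (hG : G ⊆ R) : Sg m G ⊆ R :=
  fun _ hx => hx R hR hG

/-- The set `s⁻¹(D)`. -/
def dotSet {N : ℕ} {ι : Type} (s : ι → El N) : Set ι := {i | (s i).2 = Cnt.dot}

def IsComputational {N : ℕ} {ι : Type} (s : ι → El N) : Prop :=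
  Sync s ∧ (dotSet s).Subsingleton

section Operations

variable {N : ℕ} (mm : Minsky N) {x y z u x' y' : El N}

lemma meet_fst : (meet x y).1 = min x.1 y.1 := by
  unfold meet; split_ifs with h
  · simp [h]
  · rfl

lemma snd_eq_dot_of_meet (h : (meet x y).2 = Cnt.dot) : x.2 = Cnt.dot := by
  unfold meet at h; split_ifs at h; exact h

lemma Mop_fst_congr (hx : x.1 = x'.1) (hy : y.1 = y'.1) : (Mop mm x y).1 = (Mop mm x' y').1 := by
  unfold Mop; rw [hx, hy]
  cases mm.instr x'.1 <;> dsimp only <;> split_ifs <;> simp [Xf, hy]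

lemma snd_eq_dot_of_Mop (h : (Mop mm x y).2 = Cnt.dot) : y.2 = Cnt.dot := by
  unfold Mop at h
  rcases hi : mm.instr x.1 with ⟨R, j⟩ | ⟨R, k, j⟩ <;> simp only [hi] at h <;>
    cases R <;> split_ifs at h <;> simp_all [regCnt, Xf]

lemma M'op_fst_congr (hx : x.1 = x'.1) : (M'op mm x).1 = (M'op mm x').1 := by
  unfold M'op; rw [hx]
  cases mm.instr x'.1 with
  | inc => exact hx
  | dec => dsimp only; split_ifs <;> rfl

lemma snd_eq_dot_of_M'op (h : (M'op mm x).2 = Cnt.dot) : x.2 = Cnt.dot := by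
  unfold M'op at h
  rcases hi : mm.instr x.1 with ⟨R, j⟩ | ⟨R, k, j⟩ <;> simp only [hi] at h
  · simp [Xf] at h
  · split_ifs at h; simp_all

lemma Iop_fst : (Iop x y).1 = 1 := by
  unfold Iop; split_ifs <;> rfl

lemma snd_eq_dot_of_Iop (h : (Iop x y).2 = Cnt.dot) : x.2 = Cnt.dot := by
  unfold Iop at h; split_ifs at h; simp_all

lemma Hop_fst : (Hop x).1 = 0 := by
  unfold Hop; split_ifs <;> rfl

lemma Hop_snd_ne_dot : (Hop x).2 ≠ Cnt.dot := by
  unfold Hop; split_ifs <;> simp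

lemma N0op_fst : (N0op x y z).1 = min y.1 z.1 := by
  unfold N0op; split_ifs with h₁ h₂
  · simp [h₁.2]
  · simp [h₂.2.2]
  · simp [Xf, meet_fst]

lemma snd_eq_dot_of_N0op (h : (N0op x y z).2 = Cnt.dot) : y.2 = Cnt.dot := by
  unfold N0op at h; split_ifs at h with h₁ h₂
  · exact h
  · exact absurd h h₂.2.1
  · simp [Xf] at h

lemma Sop_fst : (Sop x y z).1 = 1 := by
  unfold Sop; split_ifs <;> rfl

lemma Sop_snd_ne_dot : (Sop x y z).2 ≠ Cnt.dot := by
  unfold Sop; split_ifs <;> simp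

lemma Ndotop_fst : (Ndotop u x y z).1 = min x.1 (min y.1 z.1) := by
  unfold Ndotop; split_ifs with h₁ h₂ h₃ h₄
  · simp [← h₁.1, ← h₁.2.2]
  · simp [← h₂.2.2.2, ← h₂.2.2.1]
  · simp [← h₃.2.2.2, ← h₃.2.2.1]
  · simp [← h₄.2.2.2, ← h₄.2.2.1]
  · simp [Xf, meet_fst]

lemma snd_eq_dot_of_Ndotop (h : (Ndotop u x y z).2 = Cnt.dot) :
    (x.2 = Cnt.dot ∨ y.2 = Cnt.dot) ∧ (u.2 = Cnt.dot ∨ x.2 = Cnt.dot ∧ y.2 = Cnt.dot) := by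
  unfold Ndotop at h; split_ifs at h with h₁ h₂ h₃ h₄
  · exact ⟨.inl h, .inr ⟨h, h₁.1 ▸ h⟩⟩
  · exact ⟨.inl h, .inl h₂.1⟩
  · exact ⟨.inr h, .inl h₃.1⟩
  · rcases h₄.2.1 with rfl | rfl
    · exact ⟨.inl h, .inl h₄.1⟩
    · exact ⟨.inr h, .inl h₄.1⟩
  · simp [Xf] at h

end Operations

section Closure

variable {N : ℕ} {ι : Type} {a b c u v : ι → El N}

lemma isComputational_meet (ha : IsComputational a) (hb : Sync b) :
    IsComputational fun i => meet (a i) (b i) :=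
  ⟨fun i j => by simp only [meet_fst, ha.1 i j, hb i j],
    ha.2.anti fun _ hi => snd_eq_dot_of_meet hi⟩

lemma isComputational_Mop (mm : Minsky N) (ha : Sync a) (hb : IsComputational b) :
    IsComputational fun i => Mop mm (a i) (b i) :=
  ⟨fun i j => Mop_fst_congr mm (ha i j) (hb.1 i j),
    hb.2.anti fun _ hi => snd_eq_dot_of_Mop mm hi⟩

lemma isComputational_M'op (mm : Minsky N) (ha : IsComputational a) :
    IsComputational fun i => M'op mm (a i) :=
  ⟨fun i j => M'op_fst_congr mm (ha.1 i j), ha.2.anti fun _ hi => snd_eq_dot_of_M'op mm hi⟩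

lemma isComputational_Iop (ha : (dotSet a).Subsingleton) (b : ι → El N) :
    IsComputational fun i => Iop (a i) (b i) :=
  ⟨fun _ _ => by simp only [Iop_fst], ha.anti fun _ hi => snd_eq_dot_of_Iop hi⟩

lemma isComputational_Hop (a : ι → El N) : IsComputational fun i => Hop (a i) :=
  ⟨fun _ _ => by simp only [Hop_fst], fun _ hi => absurd hi Hop_snd_ne_dot⟩

lemma isComputational_N0op (a : ι → El N) (hb : IsComputational b) (hc : Sync c) :
    IsComputational fun i => N0op (a i) (b i) (c i) :=
  ⟨fun i j => by simp only [N0op_fst, hb.1 i j, hc i j],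
    hb.2.anti fun _ hi => snd_eq_dot_of_N0op hi⟩

lemma isComputational_Sop (a b c : ι → El N) : IsComputational fun i => Sop (a i) (b i) (c i) :=
  ⟨fun _ _ => by simp only [Sop_fst], fun _ hi => absurd hi Sop_snd_ne_dot⟩

lemma isComputational_Ndotop (hu : (dotSet u).Subsingleton) (ha : IsComputational a)
    (hb : IsComputational b) (hc : Sync c) :
    IsComputational fun i => Ndotop (u i) (a i) (b i) (c i) := by
  refine ⟨fun i j => by simp only [Ndotop_fst, ha.1 i j, hb.1 i j, hc i j], ?_⟩
  intro i hi j hj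
  obtain ⟨habi, hui | ⟨hai, hbi⟩⟩ := snd_eq_dot_of_Ndotop hi
  · obtain ⟨habj, huj | ⟨haj, hbj⟩⟩ := snd_eq_dot_of_Ndotop hj
    · exact hu hui huj
    · exact habi.elim (ha.2 · haj) (hb.2 · hbj)
  · exact (snd_eq_dot_of_Ndotop hj).1.elim (ha.2 hai ·) (hb.2 hbi ·)

lemma Pop_eq_left_or_right (hu : Sync u) (hv : Sync v) (a b : ι → El N) :
    (fun i => Pop (u i) (v i) (a i) (b i)) = a ∨ (fun i => Pop (u i) (v i) (a i) (b i)) = b := by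
  by_cases h : ∀ i, (u i).1 = (v i).1
  · exact .inl (funext fun i => if_pos (h i))
  · obtain ⟨i₀, h₀⟩ := not_forall.1 h
    refine .inr (funext fun i => if_neg ?_)
    rwa [hu i i₀, hv i i₀]

lemma isComputational_Pop (hu : Sync u) (hv : Sync v) (ha : IsComputational a)
    (hb : IsComputational b) : IsComputational fun i => Pop (u i) (v i) (a i) (b i) := by
  rcases Pop_eq_left_or_right hu hv a b with h | h <;> rw [h] <;> assumption

lemma isSubpower_setOf_isComputational (mm : Minsky N) :
    IsSubpower mm {s : ι → El N | IsComputational s} :=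
  ⟨fun _ ha _ hb => isComputational_meet ha hb.1,
    fun _ ha _ hb => isComputational_Mop mm ha.1 hb,
    fun _ ha => isComputational_M'op mm ha,
    fun _ ha b _ => isComputational_Iop ha.2 b,
    fun a _ => isComputational_Hop a,
    fun a _ _ hb _ hc => isComputational_N0op a hb hc.1,
    fun a _ b _ c _ => isComputational_Sop a b c,
    fun _ hu _ ha _ hb _ hc => isComputational_Ndotop hu.2 ha hb hc.1,
    fun _ hu _ hv _ ha _ hb => isComputational_Pop hu.1 hv.1 ha hb⟩

end Closure

lemma isComputational_sigmaGen (N : ℕ) {m : ℕ} (k : Fin m) : IsComputational (sigmaGen N m k) :=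
  ⟨fun i j => by simp only [sigmaGen]; split_ifs <;> rfl,
    (Set.subsingleton_singleton (a := k)).anti fun i hi => by
      by_contra h
      simp [dotSet, sigmaGen, Ne.symm h] at hi⟩

/-- The sequential relation `S_m` is computational: every element is
synchronized and has at most one coordinate with content `·`. -/
theorem seqRel_computational {N : ℕ} (mm : Minsky N) (m : ℕ) :
    ∀ s ∈ seqRel N mm m, Sync s ∧
      ∀ i j : Fin m, (s i).2 = Cnt.dot → (s j).2 = Cnt.dot → i = j := by
  intro s hs
  have hcomp : IsComputational s :=
    Sg_subset (isSubpower_setOf_isComputational mm)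
      (Set.range_subset_iff.2 (isComputational_sigmaGen N)) hs
  exact ⟨hcomp.1, fun i j hi hj => hcomp.2 hi hj⟩

end AMPaper
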